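/- arXiv:2004.14183 — 4 statements merged into one kernel-verified Lean document; each statement's English description precedes it below -/
import Mathlib

section
/- If T̂ is symmetric positive definite, then the dual functional J_S(Λ) = −log det(S⁻¹+Λ) + tr(T̂Λ) is coercive on Q_S: J_S(Λₙ) → +∞ along any sequence Λₙ ∈ Q_S with ‖Λₙ‖ → ∞. -/
/-!
Write `A = S⁻¹ + Λ ≻ 0` and pick `ε > 0` with `T̂ - ε • 1 ⪰ 0`. Then `tr (T̂ A) ≥ ε tr A`,
while `log x ≤ (ε/2) x - log (ε/2) - 1` applied to each eigenvalue gives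
`log det A ≤ (ε/2) tr A + const`. Hence `J_S(Λ) ≥ (ε/2) tr A - const`. For `A ⪰ 0` the
trace dominates the Frobenius norm (because `A i j ^ 2 ≤ A i i * A j j`), so
`tr A ≥ ‖Λ‖ - ‖S⁻¹‖ → ∞`.
-/

open Filter

open Matrix
open scoped MatrixOrder

attribute [local instance] Matrix.frobeniusNormedAddCommGroup

namespace Matrix

variable {n : Type*} [Fintype n] [DecidableEq n]

lemma PosDef.exists_pos_sub_smul_one_posSemidef {A : Matrix n n ℝ} (hA : A.PosDef) :
    ∃ ε : ℝ, 0 < ε ∧ (A - ε • (1 : Matrix n n ℝ)).PosSemidef := by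
  cases subsingleton_or_nontrivial (Matrix n n ℝ)
  · exact ⟨1, one_pos, by rw [Subsingleton.elim (A - _) 0]; exact .zero⟩
  obtain ⟨ε, hε, hle⟩ := (CFC.exists_pos_algebraMap_le_iff hA.isHermitian.isSelfAdjoint).2
    fun _ hx => hA.isStrictlyPositive.spectrum_pos hx
  exact ⟨ε, hε, by simpa [le_iff, Algebra.algebraMap_eq_smul_one] using hle⟩

lemma PosSemidef.trace_mul_nonneg {P Q : Matrix n n ℝ} (hP : P.PosSemidef) (hQ : Q.PosSemidef) :
    0 ≤ (P * Q).trace := by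
  obtain ⟨B, rfl⟩ := CStarAlgebra.nonneg_iff_eq_star_mul_self.mp hQ.nonneg
  rw [trace_mul_comm, mul_assoc, trace_mul_comm, star_eq_conjTranspose]
  exact (hP.mul_mul_conjTranspose_same B).trace_nonneg

lemma PosSemidef.smul_trace_le_trace_mul {T A : Matrix n n ℝ} {ε : ℝ}
    (hT : (T - ε • (1 : Matrix n n ℝ)).PosSemidef) (hA : A.PosSemidef) :
    ε * A.trace ≤ (T * A).trace := by
  have h := hT.trace_mul_nonneg hA
  rwa [sub_mul, trace_sub, smul_mul, one_mul, trace_smul, smul_eq_mul, sub_nonneg] at h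

lemma PosSemidef.sq_apply_le {A : Matrix n n ℝ} (hA : A.PosSemidef) (i j : n) :
    A i j ^ 2 ≤ A i i * A j j := by
  have h := LinearMap.BilinForm.apply_sq_le_of_symm (B := A.toBilin')
    (fun x => by simpa [toBilin'_apply'] using hA.dotProduct_mulVec_nonneg x)
    (LinearMap.BilinForm.isSymm_iff.mp
      (isSymm_toBilin'_iff_isSymm.mpr (isHermitian_iff_isSymm.mp hA.isHermitian)))
    (Pi.single i 1) (Pi.single j 1)
  simpa only [toBilin'_single] using h

lemma PosDef.log_det_le {A : Matrix n n ℝ} (hA : A.PosDef) {t : ℝ} (ht : 0 < t) :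
    Real.log A.det ≤ t * A.trace - Fintype.card n * (Real.log t + 1) := by
  have hpos := hA.eigenvalues_pos
  have hlog (i : n) : Real.log (hA.isHermitian.eigenvalues i) ≤
      t * hA.isHermitian.eigenvalues i - (Real.log t + 1) := by
    have := Real.log_le_sub_one_of_pos (mul_pos ht (hpos i))
    rw [Real.log_mul ht.ne' (hpos i).ne'] at this
    linarith
  rw [hA.isHermitian.det_eq_prod_eigenvalues, hA.isHermitian.trace_eq_sum_eigenvalues]
  simp only [RCLike.ofReal_real_eq_id, id]
  rw [Real.log_prod fun i _ => (hpos i).ne', Finset.mul_sum, ← nsmul_eq_mul, ← Finset.card_univ,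
    ← Finset.sum_const, ← Finset.sum_sub_distrib]
  exact Finset.sum_le_sum fun i _ => hlog i

omit [DecidableEq n] in
lemma frobenius_norm_eq_sqrt (A : Matrix n n ℝ) : ‖A‖ = √(∑ i, ∑ j, A i j ^ 2) := by
  simp only [frobenius_norm_def, Real.norm_eq_abs, Real.rpow_two, sq_abs, Real.sqrt_eq_rpow]

lemma PosSemidef.frobenius_norm_le_trace {A : Matrix n n ℝ} (hA : A.PosSemidef) :
    ‖A‖ ≤ A.trace := by
  have hsq : ∑ i, ∑ j, A i j ^ 2 ≤ A.trace ^ 2 := calc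
    ∑ i, ∑ j, A i j ^ 2 ≤ ∑ i, ∑ j, A i i * A j j :=
      Finset.sum_le_sum fun i _ => Finset.sum_le_sum fun j _ => hA.sq_apply_le i j
    _ = A.trace ^ 2 := by rw [sq, trace, Finset.sum_mul_sum]; rfl
  rw [frobenius_norm_eq_sqrt]
  exact Real.sqrt_le_iff.mpr ⟨hA.trace_nonneg, hsq⟩

lemma PosDef.le_neg_log_det_add_trace_mul {T A : Matrix n n ℝ} {ε : ℝ}
    (hε : 0 < ε) (hT : (T - ε • (1 : Matrix n n ℝ)).PosSemidef) (hA : A.PosDef) :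
    ε / 2 * ‖A‖ + Fintype.card n * (Real.log (ε / 2) + 1) ≤
      -Real.log A.det + (T * A).trace := by
  have hlogdet := hA.log_det_le (half_pos hε)
  have htrace := hT.smul_trace_le_trace_mul hA.posSemidef
  have hnorm := mul_le_mul_of_nonneg_left hA.posSemidef.frobenius_norm_le_trace (half_pos hε).le
  linarith

end Matrix

theorem dual_functional_coercive_general {m : ℕ} (S That : Matrix (Fin m) (Fin m) ℝ)
    (hThat : That.PosDef) (Λ : ℕ → Matrix (Fin m) (Fin m) ℝ)
    (hΛ : ∀ n, (Λ n).IsSymm ∧ (S⁻¹ + Λ n).PosDef)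
    (hnorm : Tendsto (fun n => Real.sqrt (∑ i, ∑ j, (Λ n i j) ^ 2)) atTop atTop) :
    Tendsto (fun n => -Real.log (S⁻¹ + Λ n).det + Matrix.trace (That * Λ n))
      atTop atTop := by
  obtain ⟨ε, hε, hThatε⟩ := hThat.exists_pos_sub_smul_one_posSemidef
  simp only [← frobenius_norm_eq_sqrt] at hnorm
  refine tendsto_atTop_mono (fun n => ?_) (tendsto_atTop_add_const_right _
    (m * (Real.log (ε / 2) + 1) - ε / 2 * ‖S⁻¹‖ - (That * S⁻¹).trace)
    (hnorm.const_mul_atTop (half_pos hε)))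
  have hbound := (hΛ n).2.le_neg_log_det_add_trace_mul hε hThatε
  have htriangle : ‖Λ n‖ ≤ ‖S⁻¹ + Λ n‖ + ‖S⁻¹‖ := by
    simpa using norm_sub_le (S⁻¹ + Λ n) S⁻¹
  rw [Matrix.mul_add, trace_add, Fintype.card_fin] at hbound
  linarith [mul_le_mul_of_nonneg_left htriangle (half_pos hε).le]

/-- Coercivity of the dual functional `J_S(Λ) = -log det(S⁻¹+Λ) + tr(T̂ Λ)` on `Q_S`
when `T̂ ≻ 0`: it blows up along any sequence whose (Frobenius) norm diverges. -/
theorem dual_functional_coercive {m : ℕ} (S That : Matrix (Fin m) (Fin m) ℝ)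
    (hS : S.PosDef) (hThat : That.PosDef) (Λ : ℕ → Matrix (Fin m) (Fin m) ℝ)
    (hΛ : ∀ n, (Λ n).IsSymm ∧ (S⁻¹ + Λ n).PosDef)
    (hnorm : Tendsto (fun n => Real.sqrt (∑ i, ∑ j, (Λ n i j) ^ 2)) atTop atTop) :
    Tendsto (fun n => -Real.log (S⁻¹ + Λ n).det + Matrix.trace (That * Λ n))
      atTop atTop :=
  dual_functional_coercive_general S That hThat Λ hΛ hnorm
end

section
/- Let S, T̂ be m×m symmetric positive definite matrices and Ω a symmetric support set containing the diagonal. Then the problem of minimizing 2D(T‖S) over positive definite symmetric T subject to P_Ω(T − T̂) = 0 admits at most one solution. -/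
/-- Gaussian Kullback–Leibler divergence between `𝒩(0,S)` and `𝒩(0,T)`. -/
noncomputable def gaussKL {m : ℕ} (T S : Matrix (Fin m) (Fin m) ℝ) : ℝ :=
  (1 / 2) * (-Real.log (S⁻¹ * T).det + Matrix.trace (S⁻¹ * T) - m)

/-!
Up to constants, `2 D(T‖S)` is `-log det T + tr(S⁻¹T)`, and `log det` is strictly midpoint
concave on positive definite matrices: writing `A = R²` and `C = R⁻¹BR⁻¹`, the inequality
`det A · det B < det ((A + B) / 2)²` becomes `∏ λᵢ < ∏ ((1 + λᵢ) / 2)²` over the eigenvalues of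
`C`, which is AM–GM. The feasible set is convex, so the midpoint of two distinct minimizers would
be feasible with a strictly smaller objective.
-/

open Finset

namespace Matrix

variable {n : Type*} [Fintype n] [DecidableEq n]

lemma IsHermitian.det_cfc {𝕜 : Type*} [RCLike 𝕜] {A : Matrix n n 𝕜} (hA : A.IsHermitian)
    (f : ℝ → ℝ) : (cfc f A).det = ∏ i, (f (hA.eigenvalues i) : 𝕜) := by
  rw [hA.cfc_eq, IsHermitian.cfc, Unitary.conjStarAlgAut_apply, det_mul, det_mul,
    mul_right_comm, ← det_mul, Unitary.mul_star_self_of_mem hA.eigenvectorUnitary.2, det_one,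
    one_mul, det_diagonal]
  rfl

lemma PosDef.det_lt_det_half_smul_one_add_sq_of_ne_one {C : Matrix n n ℝ} (hC : C.PosDef)
    (hne : C ≠ 1) : C.det < ((1 / 2 : ℝ) • (1 + C)).det ^ 2 := by
  -- discharges the `IsSelfAdjoint C` side conditions of the `cfc` lemmas below
  have hCsa : IsSelfAdjoint C := hC.isHermitian
  have hmid : (1 / 2 : ℝ) • (1 + C) = cfc (fun x : ℝ => (1 / 2 : ℝ) • (1 + x)) C := by
    rw [cfc_smul (1 / 2 : ℝ) (fun x : ℝ => 1 + x) C, cfc_const_add (1 : ℝ) (fun x : ℝ => x) C,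
      cfc_id' ℝ C, Algebra.algebraMap_eq_smul_one, one_smul]
  obtain ⟨i, hi⟩ : ∃ i, hC.isHermitian.eigenvalues i ≠ 1 := by
    by_contra! h
    refine hne ?_
    calc C = cfc (fun x : ℝ => x) C := (cfc_id' ℝ C).symm
      _ = cfc (fun _ : ℝ => 1) C := cfc_congr <| by
          rw [hC.isHermitian.spectrum_real_eq_range_eigenvalues]
          rintro _ ⟨j, rfl⟩
          exact h j
      _ = 1 := cfc_const_one ℝ C
  rw [hmid, hC.isHermitian.det_cfc, hC.isHermitian.det_eq_prod_eigenvalues, ← prod_pow]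
  refine prod_lt_prod (fun j _ => hC.eigenvalues_pos j) (fun j _ => ?_) ⟨i, mem_univ _, ?_⟩
  · simp only [RCLike.ofReal_real_eq_id, id, smul_eq_mul]
    nlinarith [sq_nonneg (1 - hC.isHermitian.eigenvalues j)]
  · have : 0 < (1 - hC.isHermitian.eigenvalues i) ^ 2 := by
      have := sub_ne_zero.mpr hi.symm
      positivity
    simp only [RCLike.ofReal_real_eq_id, id, smul_eq_mul]
    nlinarith

lemma PosDef.exists_posDef_mul_self_eq {A : Matrix n n ℝ} (hA : A.PosDef) :
    ∃ R : Matrix n n ℝ, R.PosDef ∧ R * R = A := by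
  open scoped MatrixOrder in
  have := hA.isStrictlyPositive
  exact ⟨CFC.sqrt A, isStrictlyPositive_iff_posDef.mp (.sqrt A), CFC.sqrt_mul_sqrt_self A⟩

lemma PosDef.det_mul_det_lt_det_half_smul_add_sq {A B : Matrix n n ℝ} (hA : A.PosDef)
    (hB : B.PosDef) (hne : A ≠ B) :
    A.det * B.det < ((1 / 2 : ℝ) • (A + B)).det ^ 2 := by
  obtain ⟨R, hR, rfl⟩ := hA.exists_posDef_mul_self_eq
  set C := R⁻¹ * B * R⁻¹
  have hC : C.PosDef := by
    have := hB.conjTranspose_mul_mul_same (mulVec_injective_iff_isUnit.mpr hR.inv.isUnit)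
    rwa [hR.inv.isHermitian.eq] at this
  have hBC : B = R * C * R := by
    have hdet : IsUnit R.det := hR.det_pos.ne'.isUnit
    calc B = R * R⁻¹ * B * (R⁻¹ * R) := by
          rw [mul_nonsing_inv _ hdet, nonsing_inv_mul _ hdet, one_mul, mul_one]
      _ = R * C * R := by simp only [C, mul_assoc]
  have hC1 : C ≠ 1 := fun h => hne (by rw [hBC, h, mul_one])
  have hmid : (1 / 2 : ℝ) • (R * R + B) = R * ((1 / 2 : ℝ) • (1 + C)) * R := by
    rw [hBC, Matrix.mul_smul, Matrix.smul_mul, mul_add, add_mul, mul_one]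
  have hdetR : 0 < R.det ^ 4 := pow_pos hR.det_pos 4
  calc (R * R).det * B.det = R.det ^ 4 * C.det := by rw [hBC]; simp only [det_mul]; ring
    _ < R.det ^ 4 * ((1 / 2 : ℝ) • (1 + C)).det ^ 2 :=
        mul_lt_mul_of_pos_left (hC.det_lt_det_half_smul_one_add_sq_of_ne_one hC1) hdetR
    _ = ((1 / 2 : ℝ) • (R * R + B)).det ^ 2 := by rw [hmid]; simp only [det_mul]; ring

end Matrix

open Matrix

lemma gaussKL_eq {m : ℕ} {T S : Matrix (Fin m) (Fin m) ℝ} (hS : S.det ≠ 0) (hT : T.det ≠ 0) :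
    gaussKL T S = (1 / 2) * (-Real.log S⁻¹.det - Real.log T.det + (S⁻¹ * T).trace - m) := by
  rw [gaussKL, det_mul, Real.log_mul (by simpa using hS) hT]
  ring

lemma gaussKL_half_smul_add_lt {m : ℕ} {S T₁ T₂ : Matrix (Fin m) (Fin m) ℝ} (hS : S.det ≠ 0)
    (h₁ : T₁.PosDef) (h₂ : T₂.PosDef) (hne : T₁ ≠ T₂) :
    gaussKL ((1 / 2 : ℝ) • (T₁ + T₂)) S < (gaussKL T₁ S + gaussKL T₂ S) / 2 := by
  have hM : ((1 / 2 : ℝ) • (T₁ + T₂)).PosDef := (h₁.add h₂).smul one_half_pos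
  have hlog :
      Real.log T₁.det + Real.log T₂.det < 2 * Real.log ((1 / 2 : ℝ) • (T₁ + T₂)).det := by
    have := Real.log_lt_log (mul_pos h₁.det_pos h₂.det_pos)
      (h₁.det_mul_det_lt_det_half_smul_add_sq h₂ hne)
    rwa [Real.log_mul h₁.det_pos.ne' h₂.det_pos.ne', Real.log_pow, Nat.cast_ofNat] at this
  have htr : (S⁻¹ * ((1 / 2 : ℝ) • (T₁ + T₂))).trace =
      ((S⁻¹ * T₁).trace + (S⁻¹ * T₂).trace) / 2 := by
    rw [Matrix.mul_smul, Matrix.mul_add, trace_smul, trace_add, smul_eq_mul]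
    ring
  rw [gaussKL_eq hS hM.det_pos.ne', gaussKL_eq hS h₁.det_pos.ne', gaussKL_eq hS h₂.det_pos.ne',
    htr]
  linarith

theorem KL_min_unique_general {m : ℕ} (S That : Matrix (Fin m) (Fin m) ℝ)
    (hS : S.PosDef)
    (Ω : Set (Fin m × Fin m))
    (T₁ T₂ : Matrix (Fin m) (Fin m) ℝ)
    (h₁ : T₁.PosDef ∧ T₁.IsSymm ∧ (∀ i j, (i, j) ∈ Ω → T₁ i j = That i j) ∧
      ∀ T : Matrix (Fin m) (Fin m) ℝ, T.PosDef → T.IsSymm →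
        (∀ i j, (i, j) ∈ Ω → T i j = That i j) → 2 * gaussKL T₁ S ≤ 2 * gaussKL T S)
    (h₂ : T₂.PosDef ∧ T₂.IsSymm ∧ (∀ i j, (i, j) ∈ Ω → T₂ i j = That i j) ∧
      ∀ T : Matrix (Fin m) (Fin m) ℝ, T.PosDef → T.IsSymm →
        (∀ i j, (i, j) ∈ Ω → T i j = That i j) → 2 * gaussKL T₂ S ≤ 2 * gaussKL T S) :
    T₁ = T₂ := by
  obtain ⟨hpos₁, hsymm₁, hfit₁, hmin₁⟩ := h₁
  obtain ⟨hpos₂, hsymm₂, hfit₂, hmin₂⟩ := h₂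
  by_contra hne
  set M := (1 / 2 : ℝ) • (T₁ + T₂)
  have hMpos : M.PosDef := (hpos₁.add hpos₂).smul one_half_pos
  have hMsymm : M.IsSymm := (hsymm₁.add hsymm₂).smul _
  have hMfit : ∀ i j, (i, j) ∈ Ω → M i j = That i j := fun i j hij => by
    simp only [M, Matrix.smul_apply, Matrix.add_apply, hfit₁ i j hij, hfit₂ i j hij, smul_eq_mul]
    ring
  have hM := hmin₁ M hMpos hMsymm hMfit
  have h₁₂ := hmin₁ T₂ hpos₂ hsymm₂ hfit₂
  have h₂₁ := hmin₂ T₁ hpos₁ hsymm₁ hfit₁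
  have hlt := gaussKL_half_smul_add_lt hS.det_pos.ne' hpos₁ hpos₂ hne
  linarith

/-- The problem of minimizing `2 D(T‖S)` over positive definite `T` subject to
`P_Ω(T - T̂) = 0` admits at most one solution. -/
theorem KL_min_unique {m : ℕ} (S That : Matrix (Fin m) (Fin m) ℝ)
    (hS : S.PosDef) (hThat : That.PosDef)
    (Ω : Set (Fin m × Fin m))
    (hΩsymm : ∀ i j, (i, j) ∈ Ω ↔ (j, i) ∈ Ω)
    (hΩdiag : ∀ i, (i, i) ∈ Ω)
    (T₁ T₂ : Matrix (Fin m) (Fin m) ℝ)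
    (h₁ : T₁.PosDef ∧ T₁.IsSymm ∧ (∀ i j, (i, j) ∈ Ω → T₁ i j = That i j) ∧
      ∀ T : Matrix (Fin m) (Fin m) ℝ, T.PosDef → T.IsSymm →
        (∀ i j, (i, j) ∈ Ω → T i j = That i j) → 2 * gaussKL T₁ S ≤ 2 * gaussKL T S)
    (h₂ : T₂.PosDef ∧ T₂.IsSymm ∧ (∀ i j, (i, j) ∈ Ω → T₂ i j = That i j) ∧
      ∀ T : Matrix (Fin m) (Fin m) ℝ, T.PosDef → T.IsSymm →
        (∀ i j, (i, j) ∈ Ω → T i j = That i j) → 2 * gaussKL T₂ S ≤ 2 * gaussKL T S) :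
    T₁ = T₂ :=
  KL_min_unique_general S That hS Ω T₁ T₂ h₁ h₂
end

section
/- Weak duality: for every feasible T (symmetric positive definite with P_Ω(T − T̂) = 0) and every symmetric Λ supported on Ω with S⁻¹ + Λ ≻ 0, one has −log det T + tr(S⁻¹T) ≥ log det(S⁻¹+Λ) + m − tr(T̂Λ). -/
/-!
Write `A = S⁻¹ + Λ`. Since `log x ≤ x - 1` on the eigenvalues of a positive definite matrix,
`log det B ≤ tr B - m`; applied to `B = Y A Yᴴ` where `T = Yᴴ Y`, this gives
`log det A + log det T ≤ tr (A T) - m`. Finally `tr (Λ T) = tr (T̂ Λ)`, because `Λ` vanishes off `Ω`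
and `T` agrees with `T̂` on `Ω`.
-/

namespace Matrix

theorem trace_mul_eq_of_eq_on_support {n α : Type*} [Fintype n] [NonUnitalNonAssocSemiring α]
    {Λ T T' : Matrix n n α} (h : ∀ i j, Λ i j ≠ 0 → T j i = T' j i) :
    (Λ * T).trace = (Λ * T').trace := by
  simp only [trace, diag, mul_apply]
  refine Finset.sum_congr rfl fun i _ => Finset.sum_congr rfl fun j _ => ?_
  by_cases hij : Λ i j = 0
  · simp [hij]
  · rw [h i j hij]

section PosDef

open scoped MatrixOrder

variable {n : Type*} [Fintype n] [DecidableEq n]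

theorem PosDef.log_det_le_trace_sub_card {B : Matrix n n ℝ} (hB : B.PosDef) :
    Real.log B.det ≤ B.trace - Fintype.card n := by
  have hpos := hB.eigenvalues_pos
  rw [hB.1.det_eq_prod_eigenvalues, hB.1.trace_eq_sum_eigenvalues]
  simp only [RCLike.ofReal_real_eq_id, id_eq]
  rw [Real.log_prod fun i _ => (hpos i).ne']
  calc ∑ i, Real.log (hB.1.eigenvalues i) ≤ ∑ i, (hB.1.eigenvalues i - 1) :=
        Finset.sum_le_sum fun i _ => Real.log_le_sub_one_of_pos (hpos i)
    _ = ∑ i, hB.1.eigenvalues i - Fintype.card n := by simp [Finset.sum_sub_distrib]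

theorem PosDef.log_det_add_log_det_le_trace_mul_sub_card {A T : Matrix n n ℝ}
    (hA : A.PosDef) (hT : T.PosDef) :
    Real.log A.det + Real.log T.det ≤ (A * T).trace - Fintype.card n := by
  obtain ⟨Y, rfl⟩ := CStarAlgebra.nonneg_iff_eq_star_mul_self.mp hT.posSemidef.nonneg
  rw [star_eq_conjTranspose] at hT ⊢
  have hdet : (Yᴴ * Y).det = Yᴴ.det * Y.det := det_mul _ _
  have hY : IsUnit Y := by
    rw [isUnit_iff_isUnit_det, isUnit_iff_ne_zero]
    exact right_ne_zero_of_mul (hdet ▸ hT.det_pos.ne')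
  have hB : (Y * A * Yᴴ).PosDef := hA.mul_mul_conjTranspose_same (vecMul_injective_of_isUnit hY)
  have hdetB : (Y * A * Yᴴ).det = A.det * (Yᴴ * Y).det := by
    rw [hdet, det_mul, det_mul]; ring
  have htrB : (Y * A * Yᴴ).trace = (A * (Yᴴ * Y)).trace := by
    rw [trace_mul_cycle, trace_mul_comm]
  have := hB.log_det_le_trace_sub_card
  rwa [hdetB, htrB, Real.log_mul hA.det_pos.ne' hT.det_pos.ne'] at this

end PosDef

end Matrix

theorem weak_duality_general {m : ℕ} (S That : Matrix (Fin m) (Fin m) ℝ)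
    (Ω : Set (Fin m × Fin m)) (hΩsymm : ∀ i j, (i, j) ∈ Ω ↔ (j, i) ∈ Ω)
    (T Λ : Matrix (Fin m) (Fin m) ℝ)
    (hT : T.PosDef)
    (hfeas : ∀ i j, (i, j) ∈ Ω → T i j = That i j)
    (hΛsupp : ∀ i j, (i, j) ∉ Ω → Λ i j = 0)
    (hPD : (S⁻¹ + Λ).PosDef) :
    Real.log (S⁻¹ + Λ).det + m - Matrix.trace (That * Λ)
      ≤ -Real.log T.det + Matrix.trace (S⁻¹ * T) := by
  have hkey := hPD.log_det_add_log_det_le_trace_mul_sub_card hT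
  have hΛT : (Λ * T).trace = (That * Λ).trace := by
    rw [Matrix.trace_mul_comm That]
    refine Matrix.trace_mul_eq_of_eq_on_support fun i j hij => hfeas j i ((hΩsymm i j).mp ?_)
    exact not_not.mp (mt (hΛsupp i j) hij)
  rw [Matrix.add_mul, Matrix.trace_add, hΛT, Fintype.card_fin] at hkey
  linarith

/-- Weak duality: for every feasible `T` and every dual-feasible `Λ`,
`-log det T + tr(S⁻¹ T) ≥ log det(S⁻¹+Λ) + m - tr(T̂ Λ)`. -/
theorem weak_duality {m : ℕ} (S That : Matrix (Fin m) (Fin m) ℝ)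
    (hS : S.PosDef) (hThat : That.IsSymm)
    (Ω : Set (Fin m × Fin m)) (hΩsymm : ∀ i j, (i, j) ∈ Ω ↔ (j, i) ∈ Ω)
    (T Λ : Matrix (Fin m) (Fin m) ℝ)
    (hT : T.PosDef) (hTsymm : T.IsSymm)
    (hfeas : ∀ i j, (i, j) ∈ Ω → T i j = That i j)
    (hΛ : Λ.IsSymm) (hΛsupp : ∀ i j, (i, j) ∉ Ω → Λ i j = 0)
    (hPD : (S⁻¹ + Λ).PosDef) :
    Real.log (S⁻¹ + Λ).det + m - Matrix.trace (That * Λ)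
      ≤ -Real.log T.det + Matrix.trace (S⁻¹ * T) :=
  weak_duality_general S That Ω hΩsymm T Λ hT hfeas hΛsupp hPD
end

section
/- If T ≻ 0 satisfies P_Ω(T − T̂) = 0 and T⁻¹ = S⁻¹ + Λ with Λ symmetric supported on Ω and S⁻¹ + Λ ≻ 0, then T minimizes −log det T' + tr(S⁻¹T') over all symmetric positive definite T' with P_Ω(T' − T̂) = 0. -/
/-!
Since `T⁻¹ = S⁻¹ + Λ`, the objective differs from `-log det T' + tr(T⁻¹ T')` by `-tr(Λ T')`,
and `tr(Λ T') = tr(Λ T)` on the feasible set because `Λ` lives on the symmetric set `Ω`,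
where `T'` and `T` agree.
So it suffices that `T` minimizes `-log det T' + tr(T⁻¹ T')`, which is the gradient inequality
`log det T' - log det T ≤ tr(T⁻¹ T') - m` for the concave function `log det`. Conjugating by
`T^{-1/2}` reduces that to `log det A ≤ tr A - m` for `A ≻ 0`, i.e. to `log λ ≤ λ - 1` on each
eigenvalue.
-/

open Matrix
open scoped MatrixOrder

namespace Matrix

variable {n : Type*} [Fintype n]

theorem trace_mul_eq_zero_of_disjoint_support {R : Type*} [NonUnitalNonAssocSemiring R]
    {A B : Matrix n n R} (h : ∀ i j, A i j = 0 ∨ B j i = 0) : (A * B).trace = 0 :=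
  Finset.sum_eq_zero fun i _ => Finset.sum_eq_zero fun j _ => by
    rcases h i j with h | h <;> simp [h]

variable [DecidableEq n]

theorem PosDef.log_det_le_trace_sub_card_s15 {A : Matrix n n ℝ} (hA : A.PosDef) :
    Real.log A.det ≤ A.trace - Fintype.card n := by
  have hpos := hA.eigenvalues_pos
  rw [hA.isHermitian.det_eq_prod_eigenvalues, hA.isHermitian.trace_eq_sum_eigenvalues]
  simp only [RCLike.ofReal_real_eq_id, id]
  rw [Real.log_prod fun i _ => (hpos i).ne']
  calc ∑ i, Real.log (hA.isHermitian.eigenvalues i)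
      ≤ ∑ i, (hA.isHermitian.eigenvalues i - 1) :=
        Finset.sum_le_sum fun i _ => Real.log_le_sub_one_of_pos (hpos i)
    _ = _ := by simp [Finset.sum_sub_distrib]

theorem PosDef.log_det_sub_log_det_le {A B : Matrix n n ℝ} (hA : A.PosDef) (hB : B.PosDef) :
    Real.log B.det - Real.log A.det ≤ (A⁻¹ * B).trace - Fintype.card n := by
  set Q := CFC.sqrt A⁻¹
  have hQ : Q.PosDef := (IsStrictlyPositive.sqrt A⁻¹ hA.inv.isStrictlyPositive).posDef
  have hQQ : Q * Q = A⁻¹ := CFC.sqrt_mul_sqrt_self A⁻¹ hA.inv.posSemidef.nonneg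
  have hQBQ : (Q * B * Q).PosDef := by
    simpa only [hQ.isHermitian.eq] using
      hB.conjTranspose_mul_mul_same (mulVec_injective_iff_isUnit.mpr hQ.isUnit)
  have hdet : (Q * B * Q).det = B.det / A.det := by
    rw [det_mul, det_mul, mul_right_comm, ← det_mul, hQQ, det_nonsing_inv,
      Ring.inverse_eq_inv, inv_mul_eq_div]
  have htrace : (Q * B * Q).trace = (A⁻¹ * B).trace := by
    rw [trace_mul_comm, ← Matrix.mul_assoc, hQQ]
  have := hQBQ.log_det_le_trace_sub_card_s15
  rwa [hdet, htrace, Real.log_div hB.det_pos.ne' hA.det_pos.ne'] at this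

end Matrix

theorem KKT_sufficiency_general {m : ℕ} (S That : Matrix (Fin m) (Fin m) ℝ)
    (Ω : Set (Fin m × Fin m)) (hΩsymm : ∀ i j, (i, j) ∈ Ω ↔ (j, i) ∈ Ω)
    (T Λ : Matrix (Fin m) (Fin m) ℝ)
    (hT : T.PosDef) (hfeas : ∀ i j, (i, j) ∈ Ω → T i j = That i j)
    (hΛsupp : ∀ i j, (i, j) ∉ Ω → Λ i j = 0)
    (hinv : T⁻¹ = S⁻¹ + Λ) :
    ∀ T' : Matrix (Fin m) (Fin m) ℝ, T'.PosDef → T'.IsSymm →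
      (∀ i j, (i, j) ∈ Ω → T' i j = That i j) →
      -Real.log T.det + Matrix.trace (S⁻¹ * T)
        ≤ -Real.log T'.det + Matrix.trace (S⁻¹ * T') := by
  intro T' hT' _ hfeas'
  have htrace_Λ : (Λ * (T' - T)).trace = 0 := by
    refine trace_mul_eq_zero_of_disjoint_support fun i j => ?_
    by_cases hij : (i, j) ∈ Ω
    · have hji := (hΩsymm i j).mp hij
      exact .inr (by rw [Matrix.sub_apply, hfeas' j i hji, hfeas j i hji, sub_self])
    · exact .inl (hΛsupp i j hij)
  have htrace_inv_mul : (T⁻¹ * T).trace = Fintype.card (Fin m) := by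
    rw [nonsing_inv_mul T hT.det_pos.ne'.isUnit, trace_one]
  have htrace : (S⁻¹ * T').trace - (S⁻¹ * T).trace
      = (T⁻¹ * T').trace - Fintype.card (Fin m) := by
    rw [← trace_sub, ← Matrix.mul_sub, eq_sub_of_add_eq hinv.symm, Matrix.sub_mul, trace_sub,
      htrace_Λ, Matrix.mul_sub, trace_sub, htrace_inv_mul, sub_zero]
  linarith [hT.log_det_sub_log_det_le hT']

/-- KKT sufficiency: if `T ≻ 0` is feasible (`P_Ω(T - T̂) = 0`) and `T⁻¹ = S⁻¹ + Λ` for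
some symmetric `Λ` supported on `Ω` with `S⁻¹ + Λ ≻ 0`, then `T` minimizes
`-log det T' + tr(S⁻¹ T')` over feasible positive definite `T'`. -/
theorem KKT_sufficiency {m : ℕ} (S That : Matrix (Fin m) (Fin m) ℝ)
    (hS : S.PosDef) (hThat : That.PosDef)
    (Ω : Set (Fin m × Fin m)) (hΩsymm : ∀ i j, (i, j) ∈ Ω ↔ (j, i) ∈ Ω)
    (T Λ : Matrix (Fin m) (Fin m) ℝ)
    (hT : T.PosDef) (hfeas : ∀ i j, (i, j) ∈ Ω → T i j = That i j)
    (hΛ : Λ.IsSymm) (hΛsupp : ∀ i j, (i, j) ∉ Ω → Λ i j = 0)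
    (hinv : T⁻¹ = S⁻¹ + Λ) (hPD : (S⁻¹ + Λ).PosDef) :
    ∀ T' : Matrix (Fin m) (Fin m) ℝ, T'.PosDef → T'.IsSymm →
      (∀ i j, (i, j) ∈ Ω → T' i j = That i j) →
      -Real.log T.det + Matrix.trace (S⁻¹ * T)
        ≤ -Real.log T'.det + Matrix.trace (S⁻¹ * T') :=
  KKT_sufficiency_general S That Ω hΩsymm T Λ hT hfeas hΛsupp hinv
end
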